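/- Let G' be a vertex-split of the complete bipartite graph K_{m,n} with m = n (so |X'| = m, |Y'| = 2n). Then every subset S ⊆ X' with |S| = m/2 (n even) satisfies |N(S)| ≥ (1 + 2/n)·|S|, i.e. |N(S)| ≥ (m+2)/2. -/

import Mathlib

/-- `G'` is a *vertex-split* of the bipartite graph `G` (with bipartition `(α, β)`):
each vertex `y : β` is split into two copies `Sum.inl y ∈ Y_a` and `Sum.inr y ∈ Y_b`,
the edges of `G` incident to `y` are distributed between the two copies (each edge
`{x, y}` of `G` becomes exactly one of `{x, y_a}`, `{x, y_b}`), the degrees of the two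
copies differ by `1` if `deg_G y` is odd and by `0` if it is even, and
`N(Y_a) ∩ N(Y_b) ≠ ∅`. Both `G` and `G'` are required to be bipartite with respect to
the indicated partitions. -/
def IsVertexSplit {α β : Type*} (G : SimpleGraph (α ⊕ β))
    (G' : SimpleGraph (α ⊕ (β ⊕ β))) : Prop :=
  (∀ a a' : α, ¬ G.Adj (Sum.inl a) (Sum.inl a')) ∧
  (∀ b b' : β, ¬ G.Adj (Sum.inr b) (Sum.inr b')) ∧
  (∀ a a' : α, ¬ G'.Adj (Sum.inl a) (Sum.inl a')) ∧
  (∀ b b' : β ⊕ β, ¬ G'.Adj (Sum.inr b) (Sum.inr b')) ∧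
  (∀ (x : α) (y : β),
    (G.Adj (Sum.inl x) (Sum.inr y) ↔
      (G'.Adj (Sum.inl x) (Sum.inr (Sum.inl y)) ∨ G'.Adj (Sum.inl x) (Sum.inr (Sum.inr y)))) ∧
    ¬ (G'.Adj (Sum.inl x) (Sum.inr (Sum.inl y)) ∧ G'.Adj (Sum.inl x) (Sum.inr (Sum.inr y)))) ∧
  (∀ y : β,
    (Even ((G.neighborSet (Sum.inr y)).ncard) →
      (G'.neighborSet (Sum.inr (Sum.inl y))).ncard =
        (G'.neighborSet (Sum.inr (Sum.inr y))).ncard) ∧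
    (Odd ((G.neighborSet (Sum.inr y)).ncard) →
      ((G'.neighborSet (Sum.inr (Sum.inl y))).ncard =
          (G'.neighborSet (Sum.inr (Sum.inr y))).ncard + 1 ∨
        (G'.neighborSet (Sum.inr (Sum.inr y))).ncard =
          (G'.neighborSet (Sum.inr (Sum.inl y))).ncard + 1))) ∧
  (∃ x : α, (∃ y : β, G'.Adj (Sum.inl x) (Sum.inr (Sum.inl y))) ∧
            (∃ y : β, G'.Adj (Sum.inl x) (Sum.inr (Sum.inr y))))

/-- Let `G'` be a vertex-split of the complete bipartite graph `K_{m,n}`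
with `m = n` and `n` even. Then every `S ⊆ X'` with `|S| = m/2` satisfies
`|N(S)| ≥ (1 + 2/n)·|S|`, i.e. `|N(S)| ≥ (m + 2)/2`. -/
theorem vertexSplit_completeBipartite_balanced_expansion (m n : ℕ)
    (hmn : m = n) (hne : Even n)
    (G' : SimpleGraph (Fin m ⊕ (Fin n ⊕ Fin n)))
    (hsplit : IsVertexSplit (completeBipartiteGraph (Fin m) (Fin n)) G') :
    ∀ S : Set (Fin m), 2 * S.ncard = m →
      ((m : ℝ) + 2) / 2 ≤
          (({y : Fin n ⊕ Fin n | ∃ x ∈ S, G'.Adj (Sum.inl x) (Sum.inr y)}).ncard : ℝ) ∧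
        (1 + 2 / (n : ℝ)) * (S.ncard : ℝ) ≤
          (({y : Fin n ⊕ Fin n | ∃ x ∈ S, G'.Adj (Sum.inl x) (Sum.inr y)}).ncard : ℝ) := by
  classical
  obtain ⟨hGaa, hGbb, haa, hbb, h5, h6, x0, ⟨y0a, hx0a⟩, ⟨y0b, hx0b⟩⟩ := hsplit
  obtain ⟨d, hd⟩ := hne
  have hm1 : 1 ≤ m := x0.pos
  have hn1 : 1 ≤ n := y0a.pos
  have hd1 : 1 ≤ d := by omega
  -- every x : Fin m has exactly one of the two copies of each y as a neighbour
  have hone : ∀ (x : Fin m) (y : Fin n),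
      ((if G'.Adj (Sum.inl x) (Sum.inr (Sum.inl y)) then 1 else 0) : ℕ)
        + (if G'.Adj (Sum.inl x) (Sum.inr (Sum.inr y)) then 1 else 0) = 1 := by
    intro x y
    obtain ⟨h51, h52⟩ := h5 x y
    have hadj : (completeBipartiteGraph (Fin m) (Fin n)).Adj (Sum.inl x) (Sum.inr y) := by
      simp
    rw [h51] at hadj
    rcases hadj with h | h
    · have : ¬ G'.Adj (Sum.inl x) (Sum.inr (Sum.inr y)) := fun h' => h52 ⟨h, h'⟩
      simp [h, this]
    · have : ¬ G'.Adj (Sum.inl x) (Sum.inr (Sum.inl y)) := fun h' => h52 ⟨h', h⟩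
      simp [h, this]
  -- degree of each left vertex is n
  have hxdeg : ∀ x : Fin m,
      (Finset.univ.filter (fun y' : Fin n ⊕ Fin n => G'.Adj (Sum.inl x) (Sum.inr y'))).card
        = n := by
    intro x
    rw [Finset.card_filter, Fintype.sum_sum_type, ← Finset.sum_add_distrib]
    simp only [hone]
    simp
  -- degree of each split copy is d (with n = d + d)
  have hns : ∀ c : Fin n ⊕ Fin n, (G'.neighborSet (Sum.inr c)).ncard
      = (Finset.univ.filter (fun x : Fin m => G'.Adj (Sum.inl x) (Sum.inr c))).card := by
    intro c
    have hset : G'.neighborSet (Sum.inr c)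
        = Sum.inl '' {x : Fin m | G'.Adj (Sum.inl x) (Sum.inr c)} := by
      ext v
      cases v with
      | inl x =>
        simp only [SimpleGraph.mem_neighborSet, Set.mem_image, Set.mem_setOf_eq]
        constructor
        · intro h; exact ⟨x, h.symm, rfl⟩
        · rintro ⟨x', hx', heq⟩
          obtain rfl := Sum.inl_injective heq
          exact hx'.symm
      | inr b =>
        simp only [SimpleGraph.mem_neighborSet, Set.mem_image, Set.mem_setOf_eq]
        constructor
        · intro h; exact absurd h (hbb c b)
        · rintro ⟨x', _, h⟩; exact absurd h (by simp)
    rw [hset, Set.ncard_image_of_injective _ Sum.inl_injective,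
      Set.ncard_eq_toFinset_card']
    simp
  have hsum : ∀ y : Fin n,
      (Finset.univ.filter (fun x : Fin m => G'.Adj (Sum.inl x) (Sum.inr (Sum.inl y)))).card
      + (Finset.univ.filter (fun x : Fin m => G'.Adj (Sum.inl x) (Sum.inr (Sum.inr y)))).card
        = n := by
    intro y
    rw [Finset.card_filter, Finset.card_filter, ← Finset.sum_add_distrib]
    simp only [fun x => hone x y]
    simp [hmn]
  have hGdeg : ∀ y : Fin n,
      ((completeBipartiteGraph (Fin m) (Fin n)).neighborSet (Sum.inr y)).ncard = m := by
    intro y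
    have hset : (completeBipartiteGraph (Fin m) (Fin n)).neighborSet (Sum.inr y)
        = Sum.inl '' (Set.univ : Set (Fin m)) := by
      ext v; cases v <;> simp
    rw [hset, Set.ncard_image_of_injective _ Sum.inl_injective, Set.ncard_univ,
      Nat.card_eq_fintype_card, Fintype.card_fin]
  have hydeg : ∀ c : Fin n ⊕ Fin n,
      (Finset.univ.filter (fun x : Fin m => G'.Adj (Sum.inl x) (Sum.inr c))).card = d := by
    intro c
    have heven : Even ((completeBipartiteGraph (Fin m) (Fin n)).neighborSet
        (Sum.inr (c.elim id id)) |>.ncard) := by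
      rw [hGdeg]; exact ⟨d, by omega⟩
    cases c with
    | inl y =>
      have heq := (h6 y).1 (by simpa using heven)
      rw [hns, hns] at heq
      have := hsum y
      omega
    | inr y =>
      have heq := (h6 y).1 (by simpa using heven)
      rw [hns, hns] at heq
      have := hsum y
      omega
  intro S hS
  set SF : Finset (Fin m) := S.toFinset with hSF
  have hScard : S.ncard = SF.card := Set.ncard_eq_toFinset_card' S
  set TF : Finset (Fin n ⊕ Fin n) :=
    Finset.univ.filter (fun y' => ∃ x ∈ S, G'.Adj (Sum.inl x) (Sum.inr y')) with hTF
  have hset : {y : Fin n ⊕ Fin n | ∃ x ∈ S, G'.Adj (Sum.inl x) (Sum.inr y)} = ↑TF := by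
    ext y'; simp [hTF]
  rw [hset, Set.ncard_coe_finset]
  -- double counting
  have key : n * SF.card ≤ TF.card * d := by
    calc n * SF.card = ∑ _x ∈ SF, n := by rw [Finset.sum_const, smul_eq_mul, mul_comm]
      _ = ∑ x ∈ SF, (Finset.univ.filter
            (fun y' : Fin n ⊕ Fin n => G'.Adj (Sum.inl x) (Sum.inr y'))).card :=
          Finset.sum_congr rfl fun x _ => (hxdeg x).symm
      _ = ∑ x ∈ SF, (TF.filter (fun y' => G'.Adj (Sum.inl x) (Sum.inr y'))).card := by
          refine Finset.sum_congr rfl fun x hx => ?_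
          congr 1
          ext y'
          simp only [Finset.mem_filter, Finset.mem_univ, true_and, hTF]
          exact ⟨fun h => ⟨⟨x, Set.mem_toFinset.mp hx, h⟩, h⟩, fun h => h.2⟩
      _ = ∑ y' ∈ TF, (SF.filter (fun x => G'.Adj (Sum.inl x) (Sum.inr y'))).card := by
          simp only [Finset.card_filter]
          exact Finset.sum_comm
      _ ≤ ∑ y' ∈ TF, (Finset.univ.filter
            (fun x : Fin m => G'.Adj (Sum.inl x) (Sum.inr y'))).card :=
          Finset.sum_le_sum fun y' _ => Finset.card_le_card
            (Finset.filter_subset_filter _ (Finset.subset_univ SF))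
      _ = ∑ _y' ∈ TF, d := Finset.sum_congr rfl fun y' _ => hydeg y'
      _ = TF.card * d := by rw [Finset.sum_const, smul_eq_mul]
  have hSFd : SF.card = d := by omega
  have hTFn : n ≤ TF.card := by
    have h1 : (d + d) * d ≤ TF.card * d := by
      calc (d + d) * d = n * SF.card := by rw [hSFd, hd]
        _ ≤ TF.card * d := key
    have := Nat.le_of_mul_le_mul_right h1 (by omega : 0 < d)
    omega
  -- conclude
  have hcast : (n : ℝ) ≤ (TF.card : ℝ) := by exact_mod_cast hTFn
  have hn0 : (n : ℝ) ≠ 0 := by positivity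
  have hnd : (n : ℝ) = 2 * d := by push_cast [hd]; ring
  have hSr : (S.ncard : ℝ) = d := by rw [hScard, hSFd]
  constructor
  · have : (m : ℝ) = n := by exact_mod_cast hmn
    have h2 : (2 : ℝ) ≤ n := by exact_mod_cast (by omega : 2 ≤ n)
    linarith
  · rw [hSr]
    have hdpos : (1 : ℝ) ≤ d := by exact_mod_cast hd1
    have : (1 + 2 / (n : ℝ)) * d = d + 1 := by
      rw [hnd]; field_simp
    rw [this]
    have hd2 : (d : ℝ) + 1 ≤ 2 * d := by linarith
    linarith [hcast, hnd.symm.le]
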